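/- With X = L^p(0,1) and the countable family of semigroups T_j as above (doubling on [0,4^{−j}) composed with left translation and truncation), the switched system is not uniformly exponentially bounded: for each n ∈ ℕ let σ_n switch at times τ_k = 4^{−k} through modes j_k = k+1 (k = 0,…,n); then for every ε ∈ (0, 4^{−n}), ‖T_{σ_n}(1−ε)‖ ≥ 2^{n/p}, hence sup over n and ε ∈ [0,1] of ‖T_{σ_n}(1−ε)‖ = +∞. -/

import Mathlib

open MeasureTheory Real Filter Set Topology

/-- The mode-`j` semigroup on `L^p(0,1)`: left translation with truncation and a gain
`2^{1/p}` on the interval `[0, 4^{−j})`. -/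
noncomputable def Tmode (p : ℝ) (j : ℕ) (t : ℝ) (f : ℝ → ℝ) : ℝ → ℝ := fun s =>
  if 0 ≤ s ∧ s ≤ 1 - t then
    (if s < ((4:ℝ) ^ j)⁻¹ then (2:ℝ) ^ (1 / p) * f (s + t) else f (s + t))
  else 0

/-- The first `n` stages of the destabilizing signal `σ_n`: mode `k+1` acts for the duration
`3·4^{−(k+1)}`, i.e. on the time interval `[1 − 4^{−k}, 1 − 4^{−(k+1)})`. -/
noncomputable def steps (p : ℝ) : ℕ → (ℝ → ℝ) → ℝ → ℝ
  | 0, f => f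
  | Nat.succ k, f => Tmode p (k + 1) (3 * ((4:ℝ) ^ (k + 1))⁻¹) (steps p k f)

/-- The full evolution operator `T_{σ_n}(1−ε)`: after the `n` stages, mode `n+1` acts for the
remaining time `4^{−n} − ε`. -/
noncomputable def fullEvol (p : ℝ) (n : ℕ) (ε : ℝ) (f : ℝ → ℝ) : ℝ → ℝ :=
  Tmode p (n + 1) (((4:ℝ) ^ n)⁻¹ - ε) (steps p n f)

/-!
Mode `j` translates to the left and multiplies by `2^{1/p}` on `[0, 4^{-j})`. Take the bump
`f = ε^{-1/p} · 1_{(1-ε,1)}`, of unit `L^p` mass. Stage `k+1` of `σ_n` moves the bump from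
`(4^{-k}-ε, 4^{-k})` to `(4^{-(k+1)}-ε, 4^{-(k+1)})`, which lies inside the gain region of mode
`k+1`, so after `n` stages it has been amplified by `2^{n/p}`; the last stage moves it to `(0, ε)`,
where the factor is at least `1`. Hence `‖T_{σ_n}(1-ε) f‖_p^p ≥ 2^n`.
-/

noncomputable def modeGain (p : ℝ) (j : ℕ) (s : ℝ) : ℝ :=
  if s < ((4:ℝ) ^ j)⁻¹ then (2:ℝ) ^ (1 / p) else 1

lemma Tmode_apply (p : ℝ) (j : ℕ) (t : ℝ) (f : ℝ → ℝ) (s : ℝ) :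
    Tmode p j t f s = if 0 ≤ s ∧ s ≤ 1 - t then modeGain p j s * f (s + t) else 0 := by
  unfold Tmode modeGain
  split_ifs <;> ring

lemma one_le_modeGain {p : ℝ} (hp : 0 ≤ p) (j : ℕ) (s : ℝ) : 1 ≤ modeGain p j s := by
  unfold modeGain
  split_ifs
  · exact Real.one_le_rpow one_le_two (by positivity)
  · rfl

lemma modeGain_le {p : ℝ} (hp : 0 ≤ p) (j : ℕ) (s : ℝ) : modeGain p j s ≤ (2:ℝ) ^ (1 / p) := by
  unfold modeGain
  split_ifs
  · rfl
  · exact Real.one_le_rpow one_le_two (by positivity)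

lemma measurable_modeGain (p : ℝ) (j : ℕ) : Measurable (modeGain p j) :=
  Measurable.ite measurableSet_Iio measurable_const measurable_const

lemma Tmode_indicator_Ioo (p : ℝ) (j : ℕ) {a b t : ℝ} (ht : t ≤ a) (hb : b ≤ 1) (c : ℝ) :
    Tmode p j t ((Ioo a b).indicator fun _ => c) =
      (Ioo (a - t) (b - t)).indicator fun s => modeGain p j s * c := by
  funext s
  have hshift : s + t ∈ Ioo a b ↔ s ∈ Ioo (a - t) (b - t) := by
    simp only [mem_Ioo]
    constructor <;> rintro ⟨h₁, h₂⟩ <;> constructor <;> linarith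
  rw [Tmode_apply]
  by_cases hs : s ∈ Ioo (a - t) (b - t)
  · rw [if_pos ⟨by linarith [hs.1], by linarith [hs.2]⟩, indicator_of_mem (hshift.2 hs),
      indicator_of_mem hs]
  · rw [indicator_of_notMem hs, indicator_of_notMem (mt hshift.1 hs)]
    simp

lemma four_pow_inv_succ (k : ℕ) : ((4:ℝ) ^ k)⁻¹ = 4 * ((4:ℝ) ^ (k + 1))⁻¹ := by
  rw [pow_succ]
  field_simp

lemma steps_indicator_Ioo (p : ℝ) {k : ℕ} {ε : ℝ} (hε : ε ≤ ((4:ℝ) ^ k)⁻¹) (c : ℝ) :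
    steps p k ((Ioo (1 - ε) 1).indicator fun _ => c) =
      (Ioo (((4:ℝ) ^ k)⁻¹ - ε) ((4:ℝ) ^ k)⁻¹).indicator fun _ => ((2:ℝ) ^ (1 / p)) ^ k * c := by
  induction k with
  | zero => simp [steps]
  | succ k ih =>
    have h4 := four_pow_inv_succ k
    have hpos : 0 < ((4:ℝ) ^ (k + 1))⁻¹ := by positivity
    have hk1 : ((4:ℝ) ^ k)⁻¹ ≤ 1 := inv_le_one_of_one_le₀ (one_le_pow₀ (by norm_num))
    rw [steps, ih (by linarith), Tmode_indicator_Ioo p (k + 1) (by linarith) hk1,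
      show ((4:ℝ) ^ k)⁻¹ - 3 * ((4:ℝ) ^ (k + 1))⁻¹ = ((4:ℝ) ^ (k + 1))⁻¹ by linarith,
      show ((4:ℝ) ^ k)⁻¹ - ε - 3 * ((4:ℝ) ^ (k + 1))⁻¹ = ((4:ℝ) ^ (k + 1))⁻¹ - ε by linarith]
    refine indicator_congr fun s hs => ?_
    rw [modeGain, if_pos hs.2, pow_succ]
    ring

lemma fullEvol_indicator_Ioo (p : ℝ) {n : ℕ} {ε : ℝ} (hε : ε ≤ ((4:ℝ) ^ n)⁻¹) (c : ℝ) :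
    fullEvol p n ε ((Ioo (1 - ε) 1).indicator fun _ => c) =
      (Ioo 0 ε).indicator fun s => modeGain p (n + 1) s * (((2:ℝ) ^ (1 / p)) ^ n * c) := by
  have hn1 : ((4:ℝ) ^ n)⁻¹ ≤ 1 := inv_le_one_of_one_le₀ (one_le_pow₀ (by norm_num))
  rw [fullEvol, steps_indicator_Ioo p hε, Tmode_indicator_Ioo p (n + 1) le_rfl hn1, sub_self,
    sub_sub_cancel]

lemma setIntegral_rpow_abs_indicator {p : ℝ} (hp : p ≠ 0) {S T : Set ℝ} (hS : MeasurableSet S)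
    (hST : S ⊆ T) (g : ℝ → ℝ) :
    ∫ s in T, |S.indicator g s| ^ p = ∫ s in S, |g s| ^ p := by
  have hzero : |(0:ℝ)| ^ p = 0 := by rw [abs_zero, Real.zero_rpow hp]
  have hcomp : (fun s => |S.indicator g s| ^ p) = S.indicator fun s => |g s| ^ p :=
    (indicator_comp_of_zero (g := fun x : ℝ => |x| ^ p) hzero).symm
  rw [hcomp, setIntegral_indicator hS, inter_eq_self_of_subset_right hST]

lemma rpow_mul_le_setIntegral_modeGain_mul {p : ℝ} (hp : 0 < p) (j : ℕ) {K ε : ℝ} (hK : 0 ≤ K)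
    (hε : 0 ≤ ε) : K ^ p * ε ≤ ∫ s in Ioo 0 ε, |modeGain p j s * K| ^ p := by
  have hgainK₀ : ∀ s, 0 ≤ modeGain p j s * K := fun s =>
    mul_nonneg (zero_le_one.trans (one_le_modeGain hp.le _ _)) hK
  have hbound : ∀ s, K ^ p ≤ |modeGain p j s * K| ^ p := fun s => by
    rw [abs_of_nonneg (hgainK₀ s)]
    exact Real.rpow_le_rpow hK (le_mul_of_one_le_left hK (one_le_modeGain hp.le _ _)) hp.le
  have hint : IntegrableOn (fun s => |modeGain p j s * K| ^ p) (Ioo 0 ε) :=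
    Measure.integrableOn_of_bounded (M := ((2:ℝ) ^ (1 / p) * K) ^ p) measure_Ioo_lt_top.ne
      (((measurable_modeGain p j).mul_const K).abs.pow_const p).aestronglyMeasurable
      (ae_of_all _ fun s => by
        rw [Real.norm_of_nonneg (by positivity), abs_of_nonneg (hgainK₀ s)]
        exact Real.rpow_le_rpow (hgainK₀ s)
          (mul_le_mul_of_nonneg_right (modeGain_le hp.le _ _) hK) hp.le)
  calc K ^ p * ε = K ^ p * volume.real (Ioo 0 ε) := by
        rw [Real.volume_real_Ioo_of_le hε, sub_zero]
    _ ≤ _ := setIntegral_ge_of_const_le_real measurableSet_Ioo measure_Ioo_lt_top.ne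
        (fun s _ => hbound s) hint

lemma exists_normalized_fullEvol_ge {p : ℝ} (hp : 0 < p) {n : ℕ} {ε : ℝ} (hε : 0 < ε)
    (hεn : ε ≤ ((4:ℝ) ^ n)⁻¹) :
    ∃ f : ℝ → ℝ, Measurable f ∧ (∫ s in Ioc (0:ℝ) 1, |f s| ^ p) = 1 ∧
      (2:ℝ) ^ n ≤ ∫ s in Ioc (0:ℝ) 1, |fullEvol p n ε f s| ^ p := by
  have hε1 : ε ≤ 1 := hεn.trans (inv_le_one_of_one_le₀ (one_le_pow₀ (by norm_num)))
  set c := ε⁻¹ ^ (1 / p) with hc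
  set K := ((2:ℝ) ^ (1 / p)) ^ n * c with hK
  have hc_rpow : c ^ p = ε⁻¹ := by rw [hc, one_div, Real.rpow_inv_rpow (by positivity) hp.ne']
  have hK_rpow : K ^ p = 2 ^ n * ε⁻¹ := by
    have hgain_pow : ((2:ℝ) ^ (1 / p)) ^ n = ((2:ℝ) ^ n) ^ p⁻¹ := by
      rw [← Real.rpow_mul_natCast zero_le_two, mul_comm, Real.rpow_natCast_mul zero_le_two,
        one_div]
    rw [hK, hgain_pow, Real.mul_rpow (by positivity) (by positivity), hc_rpow,
      Real.rpow_inv_rpow (by positivity) hp.ne']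
  refine ⟨(Ioo (1 - ε) 1).indicator fun _ => c, measurable_const.indicator measurableSet_Ioo,
    ?_, ?_⟩
  · rw [setIntegral_rpow_abs_indicator hp.ne' measurableSet_Ioo
      (Ioo_subset_Ioc_self.trans (Ioc_subset_Ioc_left (by linarith))), setIntegral_const,
      Real.volume_real_Ioo_of_le (by linarith), abs_of_pos (by positivity), hc_rpow, smul_eq_mul]
    field_simp
    ring
  · rw [fullEvol_indicator_Ioo p hεn, setIntegral_rpow_abs_indicator hp.ne' measurableSet_Ioo
      (Ioo_subset_Ioc_self.trans (Ioc_subset_Ioc_right hε1))]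
    calc (2:ℝ) ^ n = K ^ p * ε := by
          rw [hK_rpow]
          field_simp
      _ ≤ _ := rpow_mul_le_setIntegral_modeGain_mul hp (n + 1) (by positivity) hε.le

/-- The switched system of doubling-translation-truncation semigroups on `L^p(0,1)` is not
uniformly exponentially bounded: for every `n` and `ε ∈ (0,4^{−n})` one has
`‖T_{σ_n}(1−ε)‖ ≥ 2^{n/p}` (witnessed by indicators `1_{[s,1]}` with `s ↑ 1`), hence the
operator norms `‖T_{σ_n}(1−ε)‖` are unbounded over `n` and `ε`. -/
theorem stmt15 (p : ℝ) (hp : 1 ≤ p) :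
    (∀ n : ℕ, ∀ ε : ℝ, 0 < ε → ε < ((4:ℝ) ^ n)⁻¹ → ∃ f : ℝ → ℝ,
      Measurable f ∧ (∫ s in Set.Ioc (0:ℝ) 1, |f s| ^ p) = 1 ∧
      (2:ℝ) ^ n ≤ ∫ s in Set.Ioc (0:ℝ) 1, |fullEvol p n ε f s| ^ p) ∧
    (∀ M : ℝ, ∃ (n : ℕ) (ε : ℝ) (f : ℝ → ℝ), 0 < ε ∧ ε < ((4:ℝ) ^ n)⁻¹ ∧
      Measurable f ∧ (∫ s in Set.Ioc (0:ℝ) 1, |f s| ^ p) = 1 ∧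
      M ≤ ∫ s in Set.Ioc (0:ℝ) 1, |fullEvol p n ε f s| ^ p) := by
  have hp₀ : 0 < p := zero_lt_one.trans_le hp
  refine ⟨fun n ε hε hεn => exists_normalized_fullEvol_ge hp₀ hε hεn.le, fun M => ?_⟩
  obtain ⟨n, hn⟩ := pow_unbounded_of_one_lt M one_lt_two
  have hε : (0:ℝ) < ((4:ℝ) ^ n)⁻¹ / 2 := by positivity
  have hεn : ((4:ℝ) ^ n)⁻¹ / 2 < ((4:ℝ) ^ n)⁻¹ := half_lt_self (by positivity)
  obtain ⟨f, hf, hnorm, hgrowth⟩ := exists_normalized_fullEvol_ge hp₀ hε hεn.le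
  exact ⟨n, _, f, hε, hεn, hf, hnorm, hn.le.trans hgrowth⟩
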